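/- Specification of the identity type: if M is a pure β-normalizing metaterm with ⟨𝐚⇒𝐚⟩M ↠ ⋆, then M is β-convertible to the identity λx.x. -/

import Mathlib

/-! The metacalculus λ→m for minimal logic: untyped λ-calculus extended with
a success constant ⋆, a guard construct (M; N), and generators ✠𝐚 / verifiers ⟨𝐚⟩
for atomic types. Terms use de Bruijn indices. -/

/-- Simple types: atomic types and arrows. -/
inductive Ty : Type
  | atom : ℕ → Ty
  | arrow : Ty → Ty → Ty

/-- Metaterms of the metacalculus λ→m (de Bruijn indices). -/
inductive Tm : Type
  | var : ℕ → Tm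
  | lam : Tm → Tm
  | app : Tm → Tm → Tm
  | star : Tm
  | guard : Tm → Tm → Tm
  | gen : ℕ → Tm
  | verif : ℕ → Tm → Tm

namespace Tm

/-- Shift de Bruijn indices ≥ c by d. -/
def shift (d c : ℕ) : Tm → Tm
  | var n => if n < c then var n else var (n + d)
  | lam M => lam (shift d (c+1) M)
  | app M N => app (shift d c M) (shift d c N)
  | star => star
  | guard M N => guard (shift d c M) (shift d c N)
  | gen a => gen a
  | verif a M => verif a (shift d c M)

/-- Capture-avoiding substitution of the variable k by N. -/
def subst (k : ℕ) (N : Tm) : Tm → Tm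
  | var n => if n = k then N else if k < n then var (n - 1) else var n
  | lam M => lam (subst (k+1) (shift 1 0 N) M)
  | app M P => app (subst k N M) (subst k N P)
  | star => star
  | guard M P => guard (subst k N M) (subst k N P)
  | gen a => gen a
  | verif a M => verif a (subst k N M)

/-- Pure metaterms: only variables, abstractions and applications. -/
def Pure : Tm → Prop
  | var _ => True
  | lam M => Pure M
  | app M N => Pure M ∧ Pure N
  | _ => False

end Tm

/-- One-step reduction of λ→m, closed under arbitrary contexts. -/
inductive Step : Tm → Tm → Prop
  | beta (M N : Tm) : Step (.app (.lam M) N) (Tm.subst 0 N M)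
  | guardStar (M : Tm) : Step (.guard .star M) M
  | verifGen (a : ℕ) : Step (.verif a (.gen a)) .star
  | lam {M M'} : Step M M' → Step (.lam M) (.lam M')
  | appL {M M'} (N) : Step M M' → Step (.app M N) (.app M' N)
  | appR {N N'} (M) : Step N N' → Step (.app M N) (.app M N')
  | guardL {M M'} (N) : Step M M' → Step (.guard M N) (.guard M' N)
  | guardR {N N'} (M) : Step N N' → Step (.guard M N) (.guard M N')
  | verif {M M'} (a) : Step M M' → Step (.verif a M) (.verif a M')

/-- Weak head reduction of λ→m: the rules closed under weak head contexts only. -/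
inductive WStep : Tm → Tm → Prop
  | beta (M N : Tm) : WStep (.app (.lam M) N) (Tm.subst 0 N M)
  | guardStar (M : Tm) : WStep (.guard .star M) M
  | verifGen (a : ℕ) : WStep (.verif a (.gen a)) .star
  | appL {M M'} (N) : WStep M M' → WStep (.app M N) (.app M' N)
  | guardL {M M'} (N) : WStep M M' → WStep (.guard M N) (.guard M' N)
  | verif {M M'} (a) : WStep M M' → WStep (.verif a M) (.verif a M')

/-- β-reduction alone, closed under arbitrary contexts. -/
inductive BStep : Tm → Tm → Prop
  | beta (M N : Tm) : BStep (.app (.lam M) N) (Tm.subst 0 N M)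
  | lam {M M'} : BStep M M' → BStep (.lam M) (.lam M')
  | appL {M M'} (N) : BStep M M' → BStep (.app M N) (.app M' N)
  | appR {N N'} (M) : BStep N N' → BStep (.app M N) (.app M N')
  | guardL {M M'} (N) : BStep M M' → BStep (.guard M N) (.guard M' N)
  | guardR {N N'} (M) : BStep N N' → BStep (.guard M N) (.guard M N')
  | verif {M M'} (a) : BStep M M' → BStep (.verif a M) (.verif a M')

mutual
/-- The generator ✠A for an arbitrary simple type A. -/
def genT : Ty → Tm
  | .atom a => .gen a
  | .arrow A B => .lam (.guard (verifT A (.var 0)) (genT B))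
/-- The verifier ⟨A⟩M for an arbitrary simple type A applied to M. -/
def verifT : Ty → Tm → Tm
  | .atom a, M => .verif a M
  | .arrow A B, M => verifT B (.app M (genT A))
end

/-! The generator `✠a` is inert in a pure context: substituting it for a variable of a pure term
creates no redex, so every reduction of `P[m := ✠a]` is the image of a β-reduction of `P`, and a
reduction to `✠a` itself comes from `P ↠β m`. Now `⟨a ⇒ a⟩M` is `⟨a⟩(M ✠a)`, which can only reach
`⋆` through `M ✠a ↠ ✠a`. Since `✠a` is not an application, this reduction contracts a head redex
`(λ.S) ✠a` with `M ↠β λ.S`, and then `S[0 := ✠a] ↠ ✠a` gives `S ↠β 0`, so that `M ↠β λ.0`. -/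

open Relation

namespace Tm

theorem Pure.shift {M : Tm} (d c : ℕ) (hM : M.Pure) : (M.shift d c).Pure := by
  induction M generalizing c with
  | var n => unfold Tm.shift; split <;> trivial
  | lam M ih => exact ih (c + 1) hM
  | app M N ihM ihN => exact ⟨ihM c hM.1, ihN c hM.2⟩
  | _ => exact hM.elim

theorem Pure.subst {M N : Tm} (k : ℕ) (hN : N.Pure) (hM : M.Pure) : (subst k N M).Pure := by
  induction M generalizing k N with
  | var n => unfold Tm.subst; split_ifs <;> trivial
  | lam M ih => exact ih (k + 1) (hN.shift 1 0) hM
  | app M P ihM ihP => exact ⟨ihM k hN hM.1, ihP k hN hM.2⟩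
  | _ => exact hM.elim

theorem shift_subst_gen (a : ℕ) (T : Tm) {c m : ℕ} (hcm : c ≤ m) :
    (subst m (gen a) T).shift 1 c = subst (m + 1) (gen a) (T.shift 1 c) := by
  induction T generalizing c m with
  | var n =>
    simp only [Tm.subst, Tm.shift]
    split_ifs <;> simp only [Tm.subst, Tm.shift] <;> split_ifs <;>
      first | rfl | (simp only [var.injEq]; omega) | omega
  | lam M ih => simp only [Tm.subst, Tm.shift, ih (Nat.succ_le_succ hcm)]
  | app M N ihM ihN => simp only [Tm.subst, Tm.shift, ihM hcm, ihN hcm]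
  | guard M N ihM ihN => simp only [Tm.subst, Tm.shift, ihM hcm, ihN hcm]
  | verif b M ih => simp only [Tm.subst, Tm.shift, ih hcm]
  | star | gen => rfl

theorem subst_subst_gen (a : ℕ) (S T : Tm) {j m : ℕ} (hjm : j ≤ m) :
    subst m (gen a) (subst j T S) = subst j (subst m (gen a) T) (subst (m + 1) (gen a) S) := by
  induction S generalizing T j m with
  | var n =>
    simp only [Tm.subst]
    split_ifs <;> simp only [Tm.subst] <;> (try split_ifs) <;>
      first | rfl | (simp only [var.injEq]; omega) | omega
  | lam M ih =>
    simp only [Tm.subst, Tm.shift, ih _ (Nat.add_le_add_right hjm 1),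
      shift_subst_gen a T (Nat.zero_le m)]
  | app M N ihM ihN => simp only [Tm.subst, ihM T hjm, ihN T hjm]
  | guard M N ihM ihN => simp only [Tm.subst, ihM T hjm, ihN T hjm]
  | verif b M ih => simp only [Tm.subst, ih T hjm]
  | star | gen => rfl

theorem subst_gen_eq_lam {a m : ℕ} {P S : Tm} (h : subst m (gen a) P = lam S) :
    ∃ S₀, P = lam S₀ ∧ S = subst (m + 1) (gen a) S₀ := by
  cases P with
  | var n => unfold Tm.subst at h; split_ifs at h
  | lam S₀ => exact ⟨S₀, rfl, (lam.inj h).symm⟩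
  | _ => cases h

theorem Pure.eq_var_of_subst_gen_eq_gen {a m : ℕ} {P : Tm} (hP : P.Pure)
    (h : Tm.subst m (gen a) P = gen a) : P = var m := by
  cases P with
  | var n =>
    unfold Tm.subst at h
    split_ifs at h with hn
    rw [hn]
  | lam | app => simp only [Tm.subst, reduceCtorEq] at h
  | _ => exact hP.elim

end Tm

open Tm

theorem Step.bStep_of_pure {t t' : Tm} (h : Step t t') (ht : t.Pure) : BStep t t' ∧ t'.Pure := by
  induction h with
  | beta M N => exact ⟨.beta M N, ht.2.subst 0 ht.1⟩
  | lam _ ih => exact ⟨.lam (ih ht).1, (ih ht).2⟩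
  | appL N _ ih => exact ⟨.appL N (ih ht.1).1, (ih ht.1).2, ht.2⟩
  | appR M _ ih => exact ⟨.appR M (ih ht.2).1, ht.1, (ih ht.2).2⟩
  | _ => exact ht.elim

theorem Step.exists_bStep_of_subst_gen {a m : ℕ} {P Q : Tm} (hP : P.Pure)
    (h : Step (subst m (gen a) P) Q) :
    ∃ P', BStep P P' ∧ P'.Pure ∧ Q = subst m (gen a) P' := by
  induction P generalizing m Q with
  | var n => unfold Tm.subst at h; split_ifs at h <;> cases h
  | lam S ih =>
    simp only [Tm.subst] at h
    cases h with
    | lam h =>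
      obtain ⟨S', hS, hS', rfl⟩ := ih hP h
      exact ⟨Tm.lam S', .lam hS, hS', rfl⟩
  | app P₁ P₂ ih₁ ih₂ =>
    simp only [Tm.subst] at h
    generalize hX : subst m (gen a) P₁ = X at h
    cases h with
    | beta S _ =>
      obtain ⟨S₀, rfl, rfl⟩ := subst_gen_eq_lam hX
      exact ⟨_, .beta S₀ P₂, hP.2.subst 0 hP.1, (subst_subst_gen a S₀ P₂ (Nat.zero_le m)).symm⟩
    | appL _ h =>
      subst hX
      obtain ⟨P₁', h₁, hP₁', rfl⟩ := ih₁ hP.1 h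
      exact ⟨Tm.app P₁' P₂, .appL P₂ h₁, ⟨hP₁', hP.2⟩, rfl⟩
    | appR _ h =>
      subst hX
      obtain ⟨P₂', h₂, hP₂', rfl⟩ := ih₂ hP.2 h
      exact ⟨Tm.app P₁ P₂', .appR P₁ h₂, ⟨hP.1, hP₂'⟩, rfl⟩
  | _ => exact hP.elim

theorem Tm.Pure.bSteps_var_of_steps_subst_gen {a m : ℕ} {P : Tm} (hP : P.Pure)
    (h : ReflTransGen Step (Tm.subst m (gen a) P) (gen a)) : ReflTransGen BStep P (var m) := by
  generalize ht : Tm.subst m (gen a) P = t at h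
  induction h using ReflTransGen.head_induction_on generalizing P with
  | refl => rw [hP.eq_var_of_subst_gen_eq_gen ht]
  | head hstep _ ih =>
    subst ht
    obtain ⟨P', hPP', hP', rfl⟩ := hstep.exists_bStep_of_subst_gen hP
    exact .head hPP' (ih hP' rfl)

theorem Tm.Pure.bSteps_id_of_steps_app_gen {a : ℕ} {U : Tm} (hU : U.Pure)
    (h : ReflTransGen Step (app U (gen a)) (gen a)) : ReflTransGen BStep U (lam (var 0)) := by
  generalize ht : app U (gen a) = t at h
  induction h using ReflTransGen.head_induction_on generalizing U with
  | refl => cases ht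
  | head hstep hrest ih =>
    subst ht
    cases hstep with
    | beta S =>
      have hS : S.Pure := hU
      exact (hS.bSteps_var_of_steps_subst_gen hrest).lift Tm.lam fun _ _ => BStep.lam
    | appL _ hU' =>
      obtain ⟨hb, hpure⟩ := hU'.bStep_of_pure hU
      exact .head hb (ih hpure rfl)
    | appR _ hgen => cases hgen

theorem steps_gen_of_steps_verif_star {a : ℕ} {X : Tm}
    (h : ReflTransGen Step (verif a X) star) : ReflTransGen Step X (gen a) := by
  generalize ht : verif a X = t at h
  induction h using ReflTransGen.head_induction_on generalizing X with
  | refl => cases ht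
  | head hstep _ ih =>
    subst ht
    cases hstep with
    | verifGen => rfl
    | verif _ hX => exact .head hX (ih rfl)

/-- Specification of the identity type: if M is a pure
β-normalizing metaterm with ⟨𝐚⇒𝐚⟩M ↠ ⋆ then M is β-convertible to λx.x. -/
theorem identity_specification (a : ℕ) (M : Tm)
    (hpure : Tm.Pure M)
    (hnorm : ∃ N, Relation.ReflTransGen BStep M N ∧ ∀ P, ¬ BStep N P)
    (h : Relation.ReflTransGen Step
      (verifT (Ty.arrow (Ty.atom a) (Ty.atom a)) M) Tm.star) :
    Relation.EqvGen BStep M (Tm.lam (Tm.var 0)) := by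
  have happ : ReflTransGen Step (app M (gen a)) (gen a) := steps_gen_of_steps_verif_star h
  exact EqvGen.reflTransGen_le_eqvGen BStep _ _ (hpure.bSteps_id_of_steps_app_gen happ)
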